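/- arXiv:1904.13223 — 5 statements merged into one kernel-verified Lean document; each statement's English description precedes it below -/
import Mathlib

section
/- Every finite ultrametric space of n points embeds into Euclidean space with squared Euclidean distances equal to the ultrametric distances: if d is an ultrametric on a finite set O of size n, then there exist vectors y_1, ..., y_n ∈ ℝ^n such that ‖y_i − y_j‖² = d(i,j) for all i, j. -/
/-!
Fix `D ≥ max d`. By the layer-cake formula `D - d i j = ∫₀^D 1[d i j < t] dt`, and for every
`t > 0` the relation `d i j < t` is an equivalence relation (the open balls of an ultrametric
partition the space), whose 0/1 matrix is the Gram matrix of the basis vectors indexed by the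
classes. Hence `(D - d) / 2` is an integral of positive semidefinite matrices, so it is the
Gram matrix of some vectors `y i ∈ ℝⁿ`, and `‖y i - y j‖² = (D + D - 2 (D - d i j)) / 2 = d i j`.
-/

open Matrix MeasureTheory Set

section

variable {n : Type*} [Fintype n]

open scoped ComplexOrder MatrixOrder Matrix.Norms.L2Operator in
lemma Matrix.PosSemidef.exists_eq_gram {𝕜 : Type*} [RCLike 𝕜] {A : Matrix n n 𝕜}
    (hA : A.PosSemidef) :
    ∃ v : n → EuclideanSpace 𝕜 (Fin (Fintype.card n)), gram 𝕜 v = A := by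
  classical
  obtain ⟨B, rfl⟩ := CStarAlgebra.nonneg_iff_eq_star_mul_self.mp hA.nonneg
  let e := Fintype.equivFin n
  refine ⟨fun i => WithLp.toLp 2 fun k => B (e.symm k) i, ?_⟩
  ext i j
  simp only [gram_apply, PiLp.inner_apply, RCLike.inner_apply, mul_apply, star_apply,
    RCLike.star_def]
  exact Fintype.sum_equiv e.symm _ _ fun k => mul_comm _ _

lemma Matrix.posSemidef_ite_of_equivalence {r : n → n → Prop} [DecidableRel r]
    (hr : Equivalence r) : (of fun i j => if r i j then (1 : ℝ) else 0).PosSemidef := by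
  classical
  let s : Setoid n := ⟨r, hr⟩
  have hgram : (of fun i j => if r i j then (1 : ℝ) else 0)
      = gram ℝ fun i => EuclideanSpace.single (Quotient.mk s i) (1 : ℝ) := by
    ext i j
    simp [EuclideanSpace.inner_single_left, Quotient.eq, s]
  rw [hgram]
  exact posSemidef_gram ℝ _

lemma Matrix.posSemidef_of_integral {X : Type*} [MeasurableSpace X] (μ : Measure X)
    (M : X → Matrix n n ℝ) (hint : ∀ i j, Integrable (fun t => M t i j) μ)
    (hM : ∀ᵐ t ∂μ, (M t).PosSemidef) : (of fun i j => ∫ t, M t i j ∂μ).PosSemidef := by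
  refine .of_dotProduct_mulVec_nonneg ?_ fun x => ?_
  · ext i j
    simp only [conjTranspose_apply, of_apply, star_trivial]
    refine integral_congr_ae ?_
    filter_upwards [hM] with t ht using ht.isHermitian.apply i j
  · have hquad : star x ⬝ᵥ (of fun i j => ∫ t, M t i j ∂μ) *ᵥ x
        = ∫ t, star x ⬝ᵥ M t *ᵥ x ∂μ := by
      simp only [dotProduct, mulVec, of_apply, star_trivial, Finset.mul_sum]
      rw [integral_finsetSum _ fun i _ => integrable_finsetSum _ fun j _ =>
        ((hint i j).mul_const _).const_mul _]
      refine Finset.sum_congr rfl fun i _ => ?_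
      rw [integral_finsetSum _ fun j _ => ((hint i j).mul_const _).const_mul _]
      refine Finset.sum_congr rfl fun j _ => ?_
      rw [integral_const_mul, integral_mul_const]
    rw [hquad]
    exact integral_nonneg_of_ae <| by
      filter_upwards [hM] with t ht using ht.dotProduct_mulVec_nonneg x

lemma ite_lt_eq_indicator {α : Type*} [LinearOrder α] (a : α) :
    (fun t => if a < t then (1 : ℝ) else 0) = (Ioi a).indicator 1 := by
  ext t
  simp [indicator_apply]

lemma integral_Ioc_ite_lt {a D : ℝ} (ha : 0 ≤ a) (haD : a ≤ D) :
    ∫ t in Ioc 0 D, (if a < t then (1 : ℝ) else 0) = D - a := by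
  rw [ite_lt_eq_indicator, integral_indicator measurableSet_Ioi,
    Measure.restrict_restrict measurableSet_Ioi, inter_comm, Ioc_inter_Ioi, sup_eq_right.2 ha]
  simp [haD]

lemma posSemidef_sub_of_ultrametric {d : n → n → ℝ} (hii : ∀ i, d i i = 0)
    (hnn : ∀ i j, 0 ≤ d i j) (hsym : ∀ i j, d i j = d j i)
    (hult : ∀ i j k, d i j ≤ max (d i k) (d k j)) {D : ℝ} (hD : ∀ i j, d i j ≤ D) :
    (of fun i j => D - d i j).PosSemidef := by
  have hlayer : (of fun i j => D - d i j)
      = of fun i j => ∫ t in Ioc 0 D, of (fun i j => if d i j < t then (1 : ℝ) else 0) i j := by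
    ext i j
    simp only [of_apply, integral_Ioc_ite_lt (hnn i j) (hD i j)]
  rw [hlayer]
  refine posSemidef_of_integral _ _ (fun i j => ?_) ?_
  · simp only [of_apply, ite_lt_eq_indicator]
    exact (integrable_const 1).indicator measurableSet_Ioi
  · filter_upwards [ae_restrict_mem measurableSet_Ioc] with t ht
    refine posSemidef_ite_of_equivalence ⟨fun i => ?_, fun h => ?_, fun hij hjk => ?_⟩
    · rw [hii]
      exact ht.1
    · rwa [hsym]
    · exact (hult _ _ _).trans_lt (max_lt hij hjk)

end

theorem ultrametric_sq_euclidean_embedding {O : Type*} [Fintype O]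
    (d : O → O → ℝ)
    (h0 : ∀ i j, d i j = 0 ↔ i = j)
    (hnn : ∀ i j, 0 ≤ d i j)
    (hsym : ∀ i j, d i j = d j i)
    (hult : ∀ i j k, d i j ≤ max (d i k) (d k j)) :
    ∃ y : O → EuclideanSpace ℝ (Fin (Fintype.card O)),
      ∀ i j, ‖y i - y j‖ ^ 2 = d i j := by
  have hii : ∀ i, d i i = 0 := fun i => (h0 i i).2 rfl
  obtain ⟨D, hD⟩ := Finite.exists_le fun p : O × O => d p.1 p.2
  have hpsd := (posSemidef_sub_of_ultrametric hii hnn hsym hult fun i j => hD (i, j)).smul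
    (show (0 : ℝ) ≤ 1 / 2 by norm_num)
  obtain ⟨y, hy⟩ := hpsd.exists_eq_gram
  have hinner : ∀ i j, inner ℝ (y i) (y j) = 1 / 2 * (D - d i j) := fun i j => by
    simpa only [gram_apply, Matrix.smul_apply, of_apply, smul_eq_mul] using congrFun₂ hy i j
  refine ⟨y, fun i j => ?_⟩
  rw [norm_sub_sq_real, ← real_inner_self_eq_norm_sq, ← real_inner_self_eq_norm_sq, hinner,
    hinner, hinner, hii, hii]
  ring
end

section
/- A symmetric matrix D with zero diagonal admits vectors y_1, ..., y_N with ‖y_i − y_j‖² = D_{ij} for all i,j if and only if the doubly centered matrix W = −(1/2) A D A is positive semidefinite, where A = I − (1/N) e eᵀ and e is the all-ones vector (classical multidimensional scaling / Schoenberg criterion). -/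
/-!
Write `κ(G)ᵢⱼ = Gᵢᵢ + Gⱼⱼ - Gᵢⱼ - Gⱼᵢ`: points with Gram matrix `G` have squared distances `κ(G)`.
The centering matrix `A` kills the all-ones vector and fixes every `eᵢ - eⱼ`, so `κ(A M A) = κ(M)`
for every `M`, and `A κ(G) A = -2 A G A` for symmetric `G`. Hence if `D = κ(G)` comes from points,
`-½ A D A = A G A` is positive semidefinite; conversely a positive semidefinite `W = -½ A D A` is
the Gram matrix of some vectors, whose squared distances are `κ(W) = -½ κ(D) = D`, since
`κ(D) = -2 D` for symmetric `D` with zero diagonal.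
-/

open Matrix

namespace Matrix

variable {ι : Type*}

section SqDistOfGram

variable {R : Type*} [CommRing R]

def sqDistOfGram (G : Matrix ι ι R) : Matrix ι ι R :=
  of fun i j => G i i + G j j - G i j - G j i

theorem norm_sub_sq_eq_sqDistOfGram {E : Type*} [NormedAddCommGroup E] [InnerProductSpace ℝ E]
    (v : ι → E) (i j : ι) : ‖v i - v j‖ ^ 2 = sqDistOfGram (gram ℝ v) i j := by
  rw [← real_inner_self_eq_norm_sq, inner_sub_left, inner_sub_right, inner_sub_right]
  simp only [sqDistOfGram, of_apply, gram_apply]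
  ring

theorem sqDistOfGram_smul (c : R) (M : Matrix ι ι R) :
    sqDistOfGram (c • M) = c • sqDistOfGram M := by
  ext i j
  simp only [sqDistOfGram, of_apply, Matrix.smul_apply, smul_eq_mul]
  ring

theorem sqDistOfGram_of_isSymm {D : Matrix ι ι R} (hD : D.IsSymm) (hdiag : ∀ i, D i i = 0) :
    sqDistOfGram D = (-2 : R) • D := by
  ext i j
  simp only [sqDistOfGram, of_apply, Matrix.smul_apply, smul_eq_mul, hdiag, hD.apply i j]
  ring

theorem sqDistOfGram_eq_vecMulVec (G : Matrix ι ι R) :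
    sqDistOfGram G = vecMulVec (diag G) 1 + vecMulVec 1 (diag G) - (G + Gᵀ) := by
  ext i j
  simp only [sqDistOfGram, of_apply, Matrix.add_apply, Matrix.sub_apply, vecMulVec_apply,
    diag_apply, Pi.one_apply, transpose_apply]
  ring

theorem sqDistOfGram_apply_eq_dotProduct_mulVec [Fintype ι] [DecidableEq ι] (M : Matrix ι ι R)
    (i j : ι) :
    sqDistOfGram M i j =
      (Pi.single i 1 - Pi.single j 1) ⬝ᵥ M *ᵥ (Pi.single i 1 - Pi.single j 1) := by
  simp only [sqDistOfGram, of_apply, mulVec_sub, mulVec_single_one, dotProduct_sub,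
    sub_dotProduct, single_one_dotProduct, col_apply]
  ring

end SqDistOfGram

section Gram

variable [Fintype ι] {𝕜 : Type*} [RCLike 𝕜]

theorem gram_toLp_transpose (B : Matrix ι ι 𝕜) :
    gram 𝕜 (fun j => WithLp.toLp 2 (Bᵀ j) : ι → EuclideanSpace 𝕜 ι) = Bᴴ * B := by
  ext i j
  simp [gram_apply, mul_apply, EuclideanSpace.inner_eq_star_dotProduct, dotProduct, mul_comm]

open scoped ComplexOrder MatrixOrder in
theorem PosSemidef.exists_eq_gram_s9 {W : Matrix ι ι 𝕜} (hW : W.PosSemidef) :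
    ∃ v : ι → EuclideanSpace 𝕜 ι, W = gram 𝕜 v := by
  classical
  obtain ⟨B, rfl⟩ := CStarAlgebra.nonneg_iff_eq_star_mul_self.mp hW.nonneg
  exact ⟨_, (gram_toLp_transpose B).symm⟩

end Gram

section Centering

variable [Fintype ι]

theorem of_one_mulVec (u : ι → ℝ) :
    (of fun _ _ => 1 : Matrix ι ι ℝ) *ᵥ u = fun _ => ∑ i, u i := by
  ext
  simp [mulVec, dotProduct]

variable [DecidableEq ι]

variable (ι) in
noncomputable def centeringMatrix : Matrix ι ι ℝ :=
  1 - (Fintype.card ι : ℝ)⁻¹ • of fun _ _ => 1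

theorem centeringMatrix_transpose : (centeringMatrix ι)ᵀ = centeringMatrix ι := by
  ext i j
  simp [centeringMatrix, one_apply, eq_comm]

theorem centeringMatrix_mulVec (u : ι → ℝ) :
    centeringMatrix ι *ᵥ u = u - (Fintype.card ι : ℝ)⁻¹ • fun _ => ∑ i, u i := by
  rw [centeringMatrix, sub_mulVec, one_mulVec, smul_mulVec, of_one_mulVec]

theorem centeringMatrix_mulVec_of_sum_eq_zero {u : ι → ℝ} (hu : ∑ i, u i = 0) :
    centeringMatrix ι *ᵥ u = u := by
  rw [centeringMatrix_mulVec, hu]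
  exact sub_eq_self.mpr (smul_eq_zero_of_right _ rfl)

theorem centeringMatrix_mulVec_one : centeringMatrix ι *ᵥ 1 = 0 := by
  ext i
  have : (Fintype.card ι : ℝ) ≠ 0 := by
    have := Nonempty.intro i
    positivity
  simp [centeringMatrix_mulVec, this]

theorem one_vecMul_centeringMatrix : 1 ᵥ* centeringMatrix ι = 0 := by
  rw [← centeringMatrix_transpose, vecMul_transpose, centeringMatrix_mulVec_one]

theorem sqDistOfGram_centeringMatrix_conj (M : Matrix ι ι ℝ) :
    sqDistOfGram (centeringMatrix ι * M * centeringMatrix ι) = sqDistOfGram M := by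
  ext i j
  simp only [sqDistOfGram_apply_eq_dotProduct_mulVec]
  set u : ι → ℝ := Pi.single i 1 - Pi.single j 1
  have hAu : centeringMatrix ι *ᵥ u = u :=
    centeringMatrix_mulVec_of_sum_eq_zero (by simp [u, Finset.sum_sub_distrib])
  have huA : u ᵥ* centeringMatrix ι = u := by
    rw [← centeringMatrix_transpose, vecMul_transpose, hAu]
  rw [← mulVec_mulVec, hAu, ← mulVec_mulVec, dotProduct_mulVec, huA]

theorem centeringMatrix_mul_sqDistOfGram_mul (G : Matrix ι ι ℝ) :
    centeringMatrix ι * sqDistOfGram G * centeringMatrix ι =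
      -(centeringMatrix ι * (G + Gᵀ) * centeringMatrix ι) := by
  simp only [sqDistOfGram_eq_vecMulVec, Matrix.mul_sub, Matrix.mul_add, Matrix.sub_mul,
    Matrix.add_mul, Matrix.mul_assoc, vecMulVec_mul, mul_vecMulVec, centeringMatrix_mulVec_one,
    one_vecMul_centeringMatrix, vecMulVec_zero, zero_vecMulVec, add_zero, zero_sub]

theorem neg_half_smul_centeringMatrix_conj_sqDistOfGram {G : Matrix ι ι ℝ} (hG : G.IsSymm) :
    (-(1 / 2) : ℝ) • (centeringMatrix ι * sqDistOfGram G * centeringMatrix ι) =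
      centeringMatrix ι * G * centeringMatrix ι := by
  rw [centeringMatrix_mul_sqDistOfGram_mul, hG.eq, ← two_smul ℝ G, Matrix.mul_smul,
    Matrix.smul_mul, smul_neg, smul_smul]
  norm_num

theorem sqDistOfGram_neg_half_smul_centeringMatrix_conj {D : Matrix ι ι ℝ} (hD : D.IsSymm)
    (hdiag : ∀ i, D i i = 0) :
    sqDistOfGram ((-(1 / 2) : ℝ) • (centeringMatrix ι * D * centeringMatrix ι)) = D := by
  rw [sqDistOfGram_smul, sqDistOfGram_centeringMatrix_conj, sqDistOfGram_of_isSymm hD hdiag,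
    smul_smul]
  norm_num

end Centering

end Matrix

theorem schoenberg_mds_criterion {N : ℕ} (D : Matrix (Fin N) (Fin N) ℝ)
    (hsym : D.IsSymm) (hdiag : ∀ i, D i i = 0) :
    (∃ (d : ℕ) (y : Fin N → EuclideanSpace ℝ (Fin d)),
        ∀ i j, ‖y i - y j‖ ^ 2 = D i j) ↔
      Matrix.PosSemidef
        ((-(1 / 2) : ℝ) •
          (((1 : Matrix (Fin N) (Fin N) ℝ) -
              (N : ℝ)⁻¹ • Matrix.of (fun _ _ => (1 : ℝ))) * D *
            ((1 : Matrix (Fin N) (Fin N) ℝ) -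
              (N : ℝ)⁻¹ • Matrix.of (fun _ _ => (1 : ℝ))))) := by
  have hA : (1 - (N : ℝ)⁻¹ • of fun _ _ => 1 : Matrix (Fin N) (Fin N) ℝ) =
      centeringMatrix (Fin N) := by
    rw [centeringMatrix, Fintype.card_fin]
  rw [hA]
  constructor
  · rintro ⟨d, y, hy⟩
    have hD : D = sqDistOfGram (gram ℝ y) := by
      ext i j
      rw [← hy, norm_sub_sq_eq_sqDistOfGram]
    have hAGA := (posSemidef_gram ℝ y).conjTranspose_mul_mul_same (centeringMatrix (Fin N))
    rw [conjTranspose_eq_transpose_of_trivial, centeringMatrix_transpose] at hAGA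
    rwa [hD, neg_half_smul_centeringMatrix_conj_sqDistOfGram
      (isHermitian_iff_isSymm.mp (isHermitian_gram ℝ y))]
  · intro hW
    obtain ⟨v, hv⟩ := hW.exists_eq_gram_s9
    refine ⟨N, v, fun i j => ?_⟩
    rw [norm_sub_sq_eq_sqDistOfGram, ← hv,
      sqDistOfGram_neg_half_smul_centeringMatrix_conj hsym hdiag]
end

section
/- For one-dimensional data, the Minimax distance between two points equals the largest gap between consecutive points lying between them: if x_1 ≤ ... ≤ x_N are reals with edge weights |x_p − x_q| on the complete graph, then for i < j, D^MM(x_i, x_j) = max_{i ≤ l < j} (x_{l+1} − x_l). -/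
/-!
A path from `i` to `j` must jump over every cut `(x l, x (l+1))` with `i ≤ l < j`, and in
one dimension the jump is at least as long as the gap it crosses; so every path has
maximal edge weight at least the largest gap. Conversely the path visiting
`i, i+1, …, j` in order uses exactly the gaps as its edges, so it attains this bound.
-/

/-- Maximum edge weight along the path `i, p..., j` (the path through the
intermediate vertices listed in `p`). -/
def chainMax {O : Type*} (D : O → O → ℝ) : O → List O → O → ℝ
  | i, [], j => D i j
  | i, k :: l, j => max (D i k) (chainMax D k l j)

/-- Minimax distance: the minimum over all paths from `i` to `j` (in the
complete graph on `O`) of the maximal edge weight along the path. -/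
noncomputable def minimax {O : Type*} (D : O → O → ℝ) (i j : O) : ℝ :=
  sInf {m : ℝ | ∃ p : List O, m = chainMax D i p j}

section General

variable {O : Type*} (D : O → O → ℝ)

theorem chainMax_append_cons (i : O) (p : List O) (k : O) (q : List O) (j : O) :
    chainMax D i (p ++ k :: q) j = max (chainMax D i p k) (chainMax D k q j) := by
  induction p generalizing i with
  | nil => rfl
  | cons a p ih => simp only [List.cons_append, chainMax, ih, max_assoc]

variable {D}

theorem minimax_eq_of_chainMax_le {i j : O} {c : ℝ} (p₀ : List O)
    (hp₀ : chainMax D i p₀ j ≤ c) (h : ∀ p, c ≤ chainMax D i p j) :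
    minimax D i j = c :=
  IsLeast.csInf_eq
    ⟨⟨p₀, (hp₀.antisymm (h p₀)).symm⟩, by rintro _ ⟨p, rfl⟩; exact h p⟩

theorem sub_le_chainMax_of_cut [Preorder O] {x : O → ℝ} (hx : Monotone x) {a b : O}
    (hcut : ∀ k, k ≤ a ∨ b ≤ k) (p : List O) {i j : O} (hia : i ≤ a) (hbj : b ≤ j) :
    x b - x a ≤ chainMax (fun p q => |x p - x q|) i p j := by
  induction p generalizing i with
  | nil => exact le_trans (by linarith [hx hia, hx hbj]) (neg_le_abs (x i - x j))
  | cons k p ih =>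
    rcases hcut k with hka | hbk
    · exact le_max_of_le_right (ih hka)
    · exact le_max_of_le_left <|
        le_trans (by linarith [hx hia, hx hbk]) (neg_le_abs (x i - x k))

end General

theorem exists_chainMax_le_of_succ_le {N : ℕ} {D : Fin N → Fin N → ℝ} {c : ℝ} {i : Fin N}
    {m : ℕ} (him : (i : ℕ) < m) (hm : m < N)
    (h : ∀ l (hl : l + 1 < N), (i : ℕ) ≤ l → l < m →
      D ⟨l, by omega⟩ ⟨l + 1, hl⟩ ≤ c) :
    ∃ p, chainMax D i p ⟨m, hm⟩ ≤ c := by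
  induction m, him using Nat.le_induction with
  | base => exact ⟨[], h i hm le_rfl (Nat.lt_succ_self _)⟩
  | succ m hm' ih =>
    obtain ⟨p, hp⟩ := ih (by omega) fun l hl hil hlm => h l hl hil (by omega)
    refine ⟨p ++ [⟨m, by omega⟩], ?_⟩
    rw [chainMax_append_cons]
    exact max_le hp (h m hm (by omega) (Nat.lt_succ_self _))

theorem minimax_one_dim_largest_gap {N : ℕ} (x : Fin N → ℝ)
    (hmono : Monotone x) (i j : Fin N) (hij : i < j) :
    minimax (fun p q => |x p - x q|) i j =
      sSup {g : ℝ | ∃ (l : ℕ) (h : l + 1 < N),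
        (i : ℕ) ≤ l ∧ l < (j : ℕ) ∧
          g = x ⟨l + 1, h⟩ - x ⟨l, Nat.lt_of_succ_lt h⟩} := by
  set G := {g : ℝ | ∃ (l : ℕ) (h : l + 1 < N),
    (i : ℕ) ≤ l ∧ l < (j : ℕ) ∧ g = x ⟨l + 1, h⟩ - x ⟨l, Nat.lt_of_succ_lt h⟩}
  have hG_ne : G.Nonempty := ⟨_, i, by omega, le_rfl, hij, rfl⟩
  have hG_bdd : BddAbove G := by
    refine ⟨x j - x i, ?_⟩
    rintro _ ⟨l, hl, hil, hlj, rfl⟩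
    exact sub_le_sub (hmono (Fin.le_def.2 (by simp only; omega))) (hmono (Fin.le_def.2 hil))
  obtain ⟨p, hp⟩ := exists_chainMax_le_of_succ_le (D := fun p q => |x p - x q|) (c := sSup G)
      hij j.isLt fun l hl hil hlj => by
    rw [abs_sub_comm, abs_of_nonneg (sub_nonneg.2 (hmono (Fin.le_def.2 (Nat.le_succ l))))]
    exact le_csSup hG_bdd ⟨l, hl, hil, hlj, rfl⟩
  refine minimax_eq_of_chainMax_le p hp fun q => csSup_le hG_ne ?_
  rintro _ ⟨l, hl, hil, hlj, rfl⟩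
  exact sub_le_chainMax_of_cut hmono (fun k => by simp only [Fin.le_def]; omega) q hil hlj
end

section
/- Incremental Minimax nearest-neighbor correctness: let G be a finite weighted graph with vertex set O ∪ {v}, and suppose S ⊆ O is a set such that every element of S has Minimax distance to v no larger than every element of O \ S (i.e., S consists of the |S| Minimax-nearest neighbors of v). Let u ∈ O \ S be a vertex minimizing the direct edge weight to the set {v} ∪ S, i.e., min_{p ∈ {v} ∪ S} D(p, u) is minimal among all unselected vertices. Then u attains the minimum Minimax distance to v among all vertices in O \ S, so S ∪ {u} consists of the |S|+1 Minimax-nearest neighbors of v. -/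
/-!
Let `p ∈ {v} ∪ S` realise the smallest edge weight `D p u` from `{v} ∪ S` to `u`. Every path
from `v` to an unselected vertex `q` leaves `{v} ∪ S` along some edge, and by the choice of `u`
that edge weighs at least `D p u`; hence `D p u ≤ D^MM(v, q)`. Going from `v` to `p` along an
optimal path and then stepping to `u` gives
`D^MM(v, u) ≤ max (D^MM(v, p)) (D p u) ≤ D^MM(v, q)`, using `D^MM(v, p) ≤ D^MM(v, q)` for `p ∈ S`.
-/

section Minimax

variable {V : Type*} (D : V → V → ℝ)

lemma chainMax_append_singleton (l : List V) (i k j : V) :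
    chainMax D i (l ++ [k]) j = max (chainMax D i l k) (D k j) := by
  induction l generalizing i with
  | nil => rfl
  | cons a l ih => simp only [List.cons_append, chainMax, ih, max_assoc]

lemma chainMax_mem_range_uncurry (l : List V) (i j : V) :
    chainMax D i l j ∈ Set.range (Function.uncurry D) := by
  induction l generalizing i with
  | nil => exact ⟨(i, j), rfl⟩
  | cons k l ih =>
    rcases max_choice (D i k) (chainMax D k l j) with h | h <;> rw [chainMax, h]
    exacts [⟨(i, k), rfl⟩, ih k]

lemma minimax_set_nonempty (i j : V) : {m : ℝ | ∃ p : List V, m = chainMax D i p j}.Nonempty :=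
  ⟨D i j, [], rfl⟩

lemma minimax_set_finite [Finite V] (i j : V) :
    {m : ℝ | ∃ p : List V, m = chainMax D i p j}.Finite :=
  (Set.finite_range _).subset fun _ ⟨l, hl⟩ => hl ▸ chainMax_mem_range_uncurry D l i j

lemma minimax_le_chainMax [Finite V] (i j : V) (l : List V) : minimax D i j ≤ chainMax D i l j :=
  csInf_le (minimax_set_finite D i j).bddBelow ⟨l, rfl⟩

lemma minimax_le [Finite V] (i j : V) : minimax D i j ≤ D i j :=
  minimax_le_chainMax D i j []

lemma exists_chainMax_eq_minimax [Finite V] (i j : V) :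
    ∃ l : List V, minimax D i j = chainMax D i l j :=
  (minimax_set_nonempty D i j).csInf_mem (minimax_set_finite D i j)

lemma minimax_le_max_minimax [Finite V] (i k j : V) :
    minimax D i j ≤ max (minimax D i k) (D k j) := by
  obtain ⟨l, hl⟩ := exists_chainMax_eq_minimax D i k
  rw [hl, ← chainMax_append_singleton]
  exact minimax_le_chainMax D i j _

lemma exists_cut_edge_le_chainMax {T : Set V} (l : List V) {i j : V} (hi : i ∈ T) (hj : j ∉ T) :
    ∃ a ∈ T, ∃ b ∉ T, D a b ≤ chainMax D i l j := by
  induction l generalizing i with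
  | nil => exact ⟨i, hi, j, hj, le_rfl⟩
  | cons k l ih =>
    by_cases hk : k ∈ T
    · obtain ⟨a, ha, b, hb, hab⟩ := ih hk
      exact ⟨a, ha, b, hb, hab.trans (le_max_right _ _)⟩
    · exact ⟨i, hi, k, hk, le_max_left _ _⟩

lemma le_minimax_of_forall_cut_edge {T : Set V} {i j : V} (hi : i ∈ T) (hj : j ∉ T) {c : ℝ}
    (hc : ∀ a ∈ T, ∀ b ∉ T, c ≤ D a b) : c ≤ minimax D i j := by
  refine le_csInf (minimax_set_nonempty D i j) ?_
  rintro _ ⟨l, rfl⟩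
  obtain ⟨a, ha, b, hb, hab⟩ := exists_cut_edge_le_chainMax D l hi hj
  exact (hc a ha b hb).trans hab

end Minimax

theorem incremental_minimax_nn_general {V : Type*} [Fintype V] [DecidableEq V]
    (D : V → V → ℝ)
    (v : V) (S : Finset V)
    -- `S` consists of the `|S|` Minimax-nearest neighbors of `v`:
    (hS : ∀ p ∈ S, ∀ q : V, q ≠ v → q ∉ S → minimax D v p ≤ minimax D v q)
    (u : V)
    -- `u` minimizes the direct edge weight to the set `{v} ∪ S`:
    (hmin : ∀ q : V, q ≠ v → q ∉ S →
      (insert v S).inf' (Finset.insert_nonempty v S) (fun p => D p u) ≤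
        (insert v S).inf' (Finset.insert_nonempty v S) (fun p => D p q)) :
    ∀ q : V, q ≠ v → q ∉ S → minimax D v u ≤ minimax D v q := by
  intro q hqv hqS
  obtain ⟨p, hp, hpu⟩ := Finset.exists_mem_eq_inf' (Finset.insert_nonempty v S) (fun p => D p u)
  have hcut : D p u ≤ minimax D v q := by
    refine le_minimax_of_forall_cut_edge D (T := ↑(insert v S)) (by simp) (by simp [hqv, hqS]) ?_
    intro a ha b hb
    simp only [Finset.coe_insert, Set.mem_insert_iff, Finset.mem_coe, not_or] at hb
    exact hpu ▸ (hmin b hb.1 hb.2).trans (Finset.inf'_le _ ha)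
  rcases Finset.mem_insert.mp hp with rfl | hpS
  · exact (minimax_le D p u).trans hcut
  · calc minimax D v u ≤ max (minimax D v p) (D p u) := minimax_le_max_minimax D v p u
      _ ≤ minimax D v q := max_le (hS p hpS q hqv hqS) hcut

theorem incremental_minimax_nn {V : Type*} [Fintype V] [DecidableEq V]
    (D : V → V → ℝ) (hsym : ∀ i j, D i j = D j i) (hnn : ∀ i j, 0 ≤ D i j)
    (hpos : ∀ i j, i ≠ j → 0 < D i j)
    (v : V) (S : Finset V) (hvS : v ∉ S)
    -- `S` consists of the `|S|` Minimax-nearest neighbors of `v`: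
    (hS : ∀ p ∈ S, ∀ q : V, q ≠ v → q ∉ S → minimax D v p ≤ minimax D v q)
    (u : V) (hu : u ≠ v) (huS : u ∉ S)
    -- `u` minimizes the direct edge weight to the set `{v} ∪ S`:
    (hmin : ∀ q : V, q ≠ v → q ∉ S →
      (insert v S).inf' (Finset.insert_nonempty v S) (fun p => D p u) ≤
        (insert v S).inf' (Finset.insert_nonempty v S) (fun p => D p q)) :
    ∀ q : V, q ≠ v → q ∉ S → minimax D v u ≤ minimax D v q :=
  incremental_minimax_nn_general D v S hS u hmin
end

section
/- Prim's algorithm sorts vertices by Minimax distance from the start vertex: if vertices v = u_0, u_1, ..., u_{N-1} are listed in the order in which Prim's algorithm (started at v) adds them to the spanning tree of a connected weighted graph, then the sequence of Minimax distances D^MM(v, u_1) ≤ D^MM(v, u_2) ≤ ... ≤ D^MM(v, u_{N-1}) is nondecreasing, and moreover D^MM(v, u_T) equals the weight of the largest edge added by Prim's algorithm up to and including step T. -/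
/-- Weight of the edge that attaches `u T` to the already-built tree
`{u 0, …, u (T-1)}` in Prim's algorithm (minimum-weight connecting edge). -/
noncomputable def primAddedWeight {N : ℕ} (D : Fin N → Fin N → ℝ)
    (u : Fin N → Fin N) (T : Fin N) : ℝ :=
  sInf {w : ℝ | ∃ s : Fin N, s < T ∧ w = D (u s) (u T)}

lemma Set.finite_setOf_exists_and_eq {α β : Type*} [Finite α] (P : α → Prop) (f : α → β) :
    {b : β | ∃ a, P a ∧ b = f a}.Finite :=
  ((Set.toFinite {a | P a}).image f).subset fun _ ⟨a, ha, hb⟩ => ⟨a, ha, hb.symm⟩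

section chainMax

variable {O : Type*} (D : O → O → ℝ)

lemma chainMax_append (k j : O) :
    ∀ (p : List O) (i : O), chainMax D i (p ++ [k]) j = max (chainMax D i p k) (D k j)
  | [], _ => rfl
  | a :: l, i => by simp only [List.cons_append, chainMax, chainMax_append k j l a, max_assoc]

lemma exists_cut_edge_le_chainMax_s16 (A : Set O) :
    ∀ (p : List O) {i j : O}, i ∈ A → j ∉ A → ∃ x ∈ A, ∃ y ∉ A, D x y ≤ chainMax D i p j
  | [], i, j, hi, hj => ⟨i, hi, j, hj, le_rfl⟩
  | a :: l, i, j, hi, hj => by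
    by_cases ha : a ∈ A
    · obtain ⟨x, hx, y, hy, hxy⟩ := exists_cut_edge_le_chainMax_s16 A l ha hj
      exact ⟨x, hx, y, hy, hxy.trans (le_max_right _ _)⟩
    · exact ⟨i, hi, a, ha, le_max_left _ _⟩

lemma minimax_eq_of_forall_le_chainMax {i j : O} {c : ℝ} (hle : ∀ p, c ≤ chainMax D i p j)
    (hex : ∃ p, chainMax D i p j ≤ c) : minimax D i j = c := by
  obtain ⟨p, hp⟩ := hex
  have hlower : c ∈ lowerBounds {m : ℝ | ∃ p : List O, m = chainMax D i p j} := by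
    rintro _ ⟨q, rfl⟩
    exact hle q
  exact le_antisymm ((csInf_le ⟨c, hlower⟩ ⟨p, rfl⟩).trans hp) (le_csInf ⟨_, [], rfl⟩ hlower)

end chainMax

section Prim

variable {N : ℕ} (D : Fin N → Fin N → ℝ) (u : Fin N → Fin N)

def IsPrimOrder : Prop :=
  ∀ T : Fin N, 0 < (T : ℕ) → ∀ q : Fin N, (∀ s : Fin N, s < T → u s ≠ q) →
    primAddedWeight D u T ≤ sInf {w : ℝ | ∃ s : Fin N, s < T ∧ w = D (u s) q}

noncomputable def primMaxAdded (T : Fin N) : ℝ :=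
  sSup {w : ℝ | ∃ s : Fin N, 0 < (s : ℕ) ∧ s ≤ T ∧ w = primAddedWeight D u s}

variable {D u}

lemma exists_primAddedWeight_eq {T : Fin N} (hT : 0 < (T : ℕ)) :
    ∃ s < T, primAddedWeight D u T = D (u s) (u T) := by
  have hne : {w : ℝ | ∃ s : Fin N, s < T ∧ w = D (u s) (u T)}.Nonempty :=
    ⟨_, ⟨0, T.pos⟩, Fin.lt_def.mpr hT, rfl⟩
  obtain ⟨s, hs, heq⟩ := hne.csInf_mem (Set.finite_setOf_exists_and_eq _ _)
  exact ⟨s, hs, heq⟩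

lemma primAddedWeight_le_primMaxAdded {s T : Fin N} (hs : 0 < (s : ℕ)) (hsT : s ≤ T) :
    primAddedWeight D u s ≤ primMaxAdded D u T :=
  le_csSup ((Set.finite_range (primAddedWeight D u)).subset <| by
    rintro _ ⟨r, -, -, rfl⟩
    exact ⟨r, rfl⟩).bddAbove ⟨s, hs, hsT, rfl⟩

lemma primMaxAdded_le {T : Fin N} {c : ℝ} (hT : 0 < (T : ℕ))
    (h : ∀ s : Fin N, 0 < (s : ℕ) → s ≤ T → primAddedWeight D u s ≤ c) :
    primMaxAdded D u T ≤ c :=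
  csSup_le ⟨_, T, hT, le_rfl, rfl⟩ <| by
    rintro _ ⟨s, hs, hsT, rfl⟩
    exact h s hs hsT

lemma primMaxAdded_mono {T T' : Fin N} (hT : 0 < (T : ℕ)) (hTT' : T ≤ T') :
    primMaxAdded D u T ≤ primMaxAdded D u T' :=
  primMaxAdded_le hT fun _ hs hsT => primAddedWeight_le_primMaxAdded hs (hsT.trans hTT')

lemma primAddedWeight_le_chainMax (hprim : IsPrimOrder D u) (hinj : Function.Injective u)
    {a s T : Fin N} (has : a < s) (hsT : s ≤ T) (p : List (Fin N)) :
    primAddedWeight D u s ≤ chainMax D (u a) p (u T) := by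
  have hT : u T ∉ u '' Set.Iio s := by
    rintro ⟨r, hr, hrT⟩
    exact (hsT.trans_lt (hinj hrT ▸ hr)).false
  obtain ⟨_, ⟨r, hr, rfl⟩, y, hy, hcut⟩ :=
    exists_cut_edge_le_chainMax_s16 D _ p (Set.mem_image_of_mem u has) hT
  have hout : ∀ r' < s, u r' ≠ y := fun r' hr' hr'y => hy ⟨r', hr', hr'y⟩
  calc primAddedWeight D u s
      ≤ sInf {w : ℝ | ∃ r' : Fin N, r' < s ∧ w = D (u r') y} :=
        hprim s ((Nat.zero_le _).trans_lt (Fin.lt_def.mp has)) y hout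
    _ ≤ D (u r) y := csInf_le (Set.finite_setOf_exists_and_eq _ _).bddBelow ⟨r, hr, rfl⟩
    _ ≤ _ := hcut

variable {v : Fin N} (h0 : 0 < N)

lemma exists_chainMax_le_primMaxAdded (hu0 : u ⟨0, h0⟩ = v) :
    ∀ T : Fin N, 0 < (T : ℕ) → ∃ p, chainMax D v p (u T) ≤ primMaxAdded D u T := by
  intro T
  induction T using WellFoundedLT.induction with
  | _ T ih =>
    intro hT
    obtain ⟨s, hsT, hparent⟩ := exists_primAddedWeight_eq (D := D) hT
    have hedge : D (u s) (u T) ≤ primMaxAdded D u T :=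
      hparent ▸ primAddedWeight_le_primMaxAdded hT le_rfl
    rcases Nat.eq_zero_or_pos s with hs | hs
    · refine ⟨[], ?_⟩
      rwa [← hu0, show (⟨0, h0⟩ : Fin N) = s from Fin.ext hs.symm]
    · obtain ⟨p, hp⟩ := ih s hsT hs
      exact ⟨p ++ [u s], (chainMax_append D _ _ p v).trans_le
        (max_le (hp.trans (primMaxAdded_mono hs hsT.le)) hedge)⟩

lemma minimax_eq_primMaxAdded (hprim : IsPrimOrder D u) (hinj : Function.Injective u)
    (hu0 : u ⟨0, h0⟩ = v) {T : Fin N} (hT : 0 < (T : ℕ)) :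
    minimax D v (u T) = primMaxAdded D u T := by
  refine minimax_eq_of_forall_le_chainMax D (fun p => primMaxAdded_le hT fun s hs hsT => ?_)
    (exists_chainMax_le_primMaxAdded h0 hu0 T hT)
  rw [← hu0]
  exact primAddedWeight_le_chainMax hprim hinj (Fin.lt_def.mpr hs) hsT p

end Prim

theorem prim_sorts_by_minimax_general {N : ℕ} (D : Fin N → Fin N → ℝ)
    (v : Fin N) (u : Fin N → Fin N) (hbij : Function.Bijective u)
    (h0 : 0 < N) (hu0 : u ⟨0, h0⟩ = v)
    -- Prim's greedy property: at each step the attached vertex has the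
    -- minimum-weight edge to the current tree among all outside vertices.
    (hprim : ∀ T : Fin N, 0 < (T : ℕ) → ∀ q : Fin N,
      (∀ s : Fin N, s < T → u s ≠ q) →
      sInf {w : ℝ | ∃ s : Fin N, s < T ∧ w = D (u s) (u T)} ≤
        sInf {w : ℝ | ∃ s : Fin N, s < T ∧ w = D (u s) q}) :
    (∀ T T' : Fin N, 0 < (T : ℕ) → T ≤ T' →
      minimax D v (u T) ≤ minimax D v (u T')) ∧
    (∀ T : Fin N, 0 < (T : ℕ) →
      minimax D v (u T) =
        sSup {w : ℝ | ∃ s : Fin N, 0 < (s : ℕ) ∧ s ≤ T ∧ w = primAddedWeight D u s}) := by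
  have hminimax := fun {T : Fin N} (hT : 0 < (T : ℕ)) =>
    minimax_eq_primMaxAdded h0 hprim hbij.injective hu0 hT
  refine ⟨fun T T' hT hTT' => ?_, fun T hT => hminimax hT⟩
  rw [hminimax hT, hminimax (hT.trans_le hTT')]
  exact primMaxAdded_mono hT hTT'

theorem prim_sorts_by_minimax {N : ℕ} (D : Fin N → Fin N → ℝ)
    (hsym : ∀ i j, D i j = D j i) (hpos : ∀ i j, i ≠ j → 0 < D i j)
    (hdiag : ∀ i, D i i = 0)
    (v : Fin N) (u : Fin N → Fin N) (hbij : Function.Bijective u)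
    (h0 : 0 < N) (hu0 : u ⟨0, h0⟩ = v)
    -- Prim's greedy property: at each step the attached vertex has the
    -- minimum-weight edge to the current tree among all outside vertices.
    (hprim : ∀ T : Fin N, 0 < (T : ℕ) → ∀ q : Fin N,
      (∀ s : Fin N, s < T → u s ≠ q) →
      sInf {w : ℝ | ∃ s : Fin N, s < T ∧ w = D (u s) (u T)} ≤
        sInf {w : ℝ | ∃ s : Fin N, s < T ∧ w = D (u s) q}) :
    (∀ T T' : Fin N, 0 < (T : ℕ) → T ≤ T' →
      minimax D v (u T) ≤ minimax D v (u T')) ∧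
    (∀ T : Fin N, 0 < (T : ℕ) →
      minimax D v (u T) =
        sSup {w : ℝ | ∃ s : Fin N, 0 < (s : ℕ) ∧ s ≤ T ∧ w = primAddedWeight D u s}) :=
  prim_sorts_by_minimax_general D v u hbij h0 hu0 hprim
end
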